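/- arXiv:2305.00838 — 6 statements merged into one kernel-verified Lean document; each statement's English description precedes it below -/
import Mathlib

section
/- (Lemma 1.) Let X ∈ ℝ^n satisfy X_i > 0 for every i ∈ Nm and X_i ≥ 0 for every i ∈ P. If (Dp)_i ≤ ((Ĉ^{−1} − C Ĉ^{−1}) v̲)_i + β for every i ∈ Nm and (Dp)_i ≥ ((Ĉ^{−1} − C Ĉ^{−1}) v̲)_i for every i ∈ P, then b(X) ≥ 0 entrywise. -/
open Matrix

/-- Lemma 1: If `X i > 0` for `i ∈ Nm`, `X i ≥ 0` for `i ∈ P`, and the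
investment conditions hold on `Nm` and `P`, then `b(X) ≥ 0` entrywise. -/
theorem stmt_2
    (n : ℕ) (hn : 1 ≤ n)
    (C : Matrix (Fin n) (Fin n) ℝ)
    (hC : ∀ i l, 0 ≤ C i l ∧ C i l ≤ 1)
    (hCdiag : ∀ i, C i i = 0)
    (c : Fin n → ℝ)
    (hcdef : ∀ i, c i = 1 - ∑ k ∈ Finset.univ.erase i, C k i)
    (hcpos : ∀ i, 0 < c i)
    (j : Fin n → ℝ) (hj : ∀ i, j i = -1 ∨ j i = 1)
    (J : Matrix (Fin n) (Fin n) ℝ) (hJ : J = Matrix.diagonal j)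
    (Chat : Matrix (Fin n) (Fin n) ℝ) (hChat : Chat = Matrix.diagonal c)
    (vlo : Fin n → ℝ) (β : ℝ) (hβ : 0 ≤ β)
    (Dp : Fin n → ℝ)
    (U : (Fin n → ℝ) → Fin n → ℝ)
    (hU : ∀ x i, U x i = if x i < 0 then β / 2 else -(β / 2))
    (b : (Fin n → ℝ) → Fin n → ℝ)
    (hb : ∀ X, b X =
      J *ᵥ ((Chat * C * Chat⁻¹ - 1) *ᵥ vlo +
        Chat *ᵥ (Dp - U (J *ᵥ X) - (β / 2) • (1 : Fin n → ℝ))))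
    (X : Fin n → ℝ)
    (hXneg : ∀ i, j i = -1 → 0 < X i)
    (hXpos : ∀ i, j i = 1 → 0 ≤ X i)
    (hDpN : ∀ i, j i = -1 → Dp i ≤ ((Chat⁻¹ - C * Chat⁻¹) *ᵥ vlo) i + β)
    (hDpP : ∀ i, j i = 1 → ((Chat⁻¹ - C * Chat⁻¹) *ᵥ vlo) i ≤ Dp i) :
    ∀ i, 0 ≤ b X i := by
  have hinv : Chat⁻¹ = Matrix.diagonal (fun i => (c i)⁻¹) := by
    rw [hChat, Matrix.inv_eq_right_inv]
    rw [Matrix.diagonal_mul_diagonal]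
    have : (fun i => c i * (c i)⁻¹) = fun _ => (1:ℝ) :=
      funext fun i => mul_inv_cancel₀ (hcpos i).ne'
    rw [this, Matrix.diagonal_one]
  intro i
  set S := ∑ l, C i l * ((c l)⁻¹ * vlo l) with hS
  have hRHS : ((Chat⁻¹ - C * Chat⁻¹) *ᵥ vlo) i = (c i)⁻¹ * vlo i - S := by
    rw [hinv, Matrix.sub_mulVec, ← Matrix.mulVec_mulVec]
    simp [Matrix.mulVec, dotProduct, Matrix.diagonal_apply, ite_mul, zero_mul,
      Finset.sum_ite_eq, mul_assoc, hS]
  have hJX : (J *ᵥ X) i = j i * X i := by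
    simp [hJ, Matrix.mulVec_diagonal]
  have hbX : b X i = j i * ((c i * S - vlo i) +
      c i * (Dp i - U (J *ᵥ X) i - β/2)) := by
    rw [hb]
    rw [Matrix.sub_mulVec, ← Matrix.mulVec_mulVec, ← Matrix.mulVec_mulVec, hinv, hChat, hJ]
    simp [Matrix.mulVec, dotProduct, Matrix.diagonal_apply, ite_mul, zero_mul,
      Finset.sum_ite_eq, mul_assoc, hS, Pi.sub_apply, mul_sub, Finset.sum_sub_distrib, Finset.mul_sum]
  have hci := hcpos i
  rcases hj i with hji | hji
  · have hX := hXneg i hji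
    have hD := hDpN i hji
    rw [hRHS] at hD
    have hUv : U (J *ᵥ X) i = β / 2 := by
      rw [hU, if_pos]; rw [hJX, hji]; nlinarith
    have key : c i * Dp i ≤ vlo i - c i * S + c i * β := by
      have h1 := mul_le_mul_of_nonneg_left hD hci.le
      have h2 : c i * ((c i)⁻¹ * vlo i - S + β) = vlo i - c i * S + c i * β := by
        field_simp
      linarith [h2 ▸ h1]
    rw [hbX, hUv, hji]
    nlinarith [key]
  · have hX := hXpos i hji
    have hD := hDpP i hji
    rw [hRHS] at hD
    have hUv : U (J *ᵥ X) i = -(β / 2) := by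
      rw [hU, if_neg]; rw [hJX, hji]; push_neg; nlinarith
    have key : vlo i - c i * S ≤ c i * Dp i := by
      have h1 := mul_le_mul_of_nonneg_left hD hci.le
      have h2 : c i * ((c i)⁻¹ * vlo i - S) = vlo i - c i * S := by
        field_simp
      linarith [h2 ▸ h1]
    rw [hbX, hUv, hji]
    nlinarith [key]
end

section
/- (Theorem 1, first part.) Consider the dynamics X(t+1) = A X(t) + b(X(t)). Assume: (i) c_{il} = 0 for every pair i, l with j_{ii} ≠ j_{ll}; (ii) (Dp)_i ≤ ((Ĉ^{−1} − C Ĉ^{−1}) v̲)_i for every i ∈ Nm; and (iii) (Dp)_i ≥ ((Ĉ^{−1} − C Ĉ^{−1}) v̲)_i for every i ∈ P. Then X(0) ≥ 0 implies X(t) ≥ 0 for all t = 0, 1, 2, … (the positive orthant is positively invariant). -/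
open Matrix

lemma diag_mulVec' {n : ℕ} (v w : Fin n → ℝ) :
    Matrix.diagonal v *ᵥ w = fun x => v x * w x :=
  funext fun x => Matrix.mulVec_diagonal v w x

/-- Theorem 1, first part: under conditions (i)-(iii) the positive orthant
is positively invariant for the dynamics `X(t+1) = A X(t) + b(X(t))`. -/
theorem stmt_5
    (n : ℕ) (hn : 1 ≤ n)
    (C : Matrix (Fin n) (Fin n) ℝ)
    (hC : ∀ i l, 0 ≤ C i l ∧ C i l ≤ 1)
    (hCdiag : ∀ i, C i i = 0)
    (c : Fin n → ℝ)
    (hcdef : ∀ i, c i = 1 - ∑ k ∈ Finset.univ.erase i, C k i)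
    (hcpos : ∀ i, 0 < c i)
    (j : Fin n → ℝ) (hj : ∀ i, j i = -1 ∨ j i = 1)
    (J : Matrix (Fin n) (Fin n) ℝ) (hJ : J = Matrix.diagonal j)
    (Chat : Matrix (Fin n) (Fin n) ℝ) (hChat : Chat = Matrix.diagonal c)
    (A : Matrix (Fin n) (Fin n) ℝ) (hA : A = J * Chat * C * Chat⁻¹ * J)
    (vlo : Fin n → ℝ) (β : ℝ) (hβ : 0 ≤ β)
    (Dp : Fin n → ℝ)
    (U : (Fin n → ℝ) → Fin n → ℝ)
    (hU : ∀ x i, U x i = if x i < 0 then β / 2 else -(β / 2))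
    (b : (Fin n → ℝ) → Fin n → ℝ)
    (hb : ∀ X, b X =
      J *ᵥ ((Chat * C * Chat⁻¹ - 1) *ᵥ vlo +
        Chat *ᵥ (Dp - U (J *ᵥ X) - (β / 2) • (1 : Fin n → ℝ))))
    (hzero : ∀ i l, j i ≠ j l → C i l = 0)
    (hDpN : ∀ i, j i = -1 → Dp i ≤ ((Chat⁻¹ - C * Chat⁻¹) *ᵥ vlo) i)
    (hDpP : ∀ i, j i = 1 → ((Chat⁻¹ - C * Chat⁻¹) *ᵥ vlo) i ≤ Dp i)
    (X : ℕ → Fin n → ℝ)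
    (hdyn : ∀ t, X (t + 1) = A *ᵥ X t + b (X t))
    (hX0 : ∀ i, 0 ≤ X 0 i) :
    ∀ t i, 0 ≤ X t i := by
  have hcne : ∀ i, c i ≠ 0 := fun i => (hcpos i).ne'
  have hChatinv : Chat⁻¹ = Matrix.diagonal (fun i => (c i)⁻¹) := by
    rw [hChat]
    apply Matrix.inv_eq_right_inv
    rw [Matrix.diagonal_mul_diagonal]
    ext a k
    rcases eq_or_ne a k with rfl | hak
    · simp [mul_inv_cancel₀ (hcne a)]
    · simp [Matrix.diagonal_apply_ne _ hak, Matrix.one_apply_ne hak]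
  -- entries of A are nonnegative
  have hAnn : ∀ i l, 0 ≤ A i l := by
    intro i l
    have hent : A i l = j i * c i * C i l * (c l)⁻¹ * j l := by
      rw [hA, hJ, hChatinv, hChat]
      simp [Matrix.mul_diagonal, Matrix.diagonal_mul, mul_assoc]
    rw [hent]
    by_cases h : C i l = 0
    · simp [h]
    · have hje : j i = j l := by
        by_contra hne; exact h (hzero i l hne)
      have hj2 : j i * j l = 1 := by
        rw [hje]; rcases hj l with h1 | h1 <;> rw [h1] <;> norm_num
      have hre : j i * c i * C i l * (c l)⁻¹ * j l = c i * C i l * (c l)⁻¹ := by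
        linear_combination (c i * C i l * (c l)⁻¹) * hj2
      rw [hre]
      have h1 := (hC i l).1
      have h2 := (hcpos i).le
      have h3 : 0 ≤ (c l)⁻¹ := inv_nonneg.2 (hcpos l).le
      positivity
  -- the condition vectors, entrywise
  have hcond : ∀ i, c i * (((Chat⁻¹ - C * Chat⁻¹) *ᵥ vlo) i)
      = vlo i - c i * ∑ l, C i l * ((c l)⁻¹ * vlo l) := by
    intro i
    rw [hChatinv, Matrix.sub_mulVec, ← Matrix.mulVec_mulVec]
    simp only [diag_mulVec', Pi.sub_apply]
    simp only [Matrix.mulVec, dotProduct]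
    rw [mul_sub, ← mul_assoc, mul_inv_cancel₀ (hcne i), one_mul]
  -- b is nonnegative on the nonnegative orthant
  have hbnn : ∀ Y : Fin n → ℝ, (∀ i, 0 ≤ Y i) → ∀ i, 0 ≤ b Y i := by
    intro Y hY i
    have hbe : b Y i = j i * (c i * (∑ l, C i l * ((c l)⁻¹ * vlo l)) - vlo i
        + c i * ((Dp i - if j i * Y i < 0 then β / 2 else -(β / 2)) - β / 2)) := by
      rw [hb, hJ, hChatinv, hChat]
      rw [Matrix.sub_mulVec, ← Matrix.mulVec_mulVec, ← Matrix.mulVec_mulVec]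
      simp only [diag_mulVec', Matrix.one_mulVec, Pi.add_apply, Pi.sub_apply, Pi.smul_apply,
        Pi.one_apply, smul_eq_mul, mul_one, hU]
      simp only [Matrix.mulVec, dotProduct]
    rw [hbe]
    set s := c i * ∑ l, C i l * ((c l)⁻¹ * vlo l) with hs
    rcases hj i with h1 | h1
    · -- j i = -1
      have hD := mul_le_mul_of_nonneg_left (hDpN i h1) (hcpos i).le
      rw [hcond i] at hD
      rw [h1]
      rcases lt_or_eq_of_le (hY i) with hY' | hY'
      · have hlt : ((-1 : ℝ) * Y i < 0) := by nlinarith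
        rw [if_pos hlt]
        nlinarith [mul_nonneg (hcpos i).le hβ]
      · have hge : ¬ ((-1 : ℝ) * Y i < 0) := by rw [← hY']; norm_num
        rw [if_neg hge]
        nlinarith [mul_nonneg (hcpos i).le hβ]
    · -- j i = 1
      have hD := mul_le_mul_of_nonneg_left (hDpP i h1) (hcpos i).le
      rw [hcond i] at hD
      rw [h1]
      have hge : ¬ ((1 : ℝ) * Y i < 0) := by
        rw [one_mul, not_lt]; exact hY i
      rw [if_neg hge]
      nlinarith
  intro t
  induction t with
  | zero => exact hX0
  | succ t ih =>
    intro i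
    rw [hdyn t]
    have h1 : 0 ≤ (A *ᵥ X t) i := by
      rw [Matrix.mulVec, dotProduct]
      exact Finset.sum_nonneg fun l _ => mul_nonneg (hAnn i l) (ih l)
    have h2 := hbnn (X t) ih i
    simpa using add_nonneg h1 h2
end

section
/- (Theorem 1, second part.) Consider the dynamics X(t+1) = A X(t) + b(X(t)). Assume: (i) c_{il} = 0 for every i ∈ P and every l ∈ Nm; and (ii) (Dp)_i ≥ ((Ĉ^{−1} − C Ĉ^{−1}) v̲)_i for every i ∈ P. If X_i(0) ≥ 0 for every i ∈ P, then X_i(t) ≥ 0 for every i ∈ P and every t = 0, 1, 2, …, regardless of the values of the components indexed by Nm. -/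
open Matrix

/-- Theorem 1, second part: under conditions (i)-(ii) the components indexed
by `P` remain nonnegative along the dynamics, regardless of the `Nm`-components. -/
theorem stmt_6
    (n : ℕ) (hn : 1 ≤ n)
    (C : Matrix (Fin n) (Fin n) ℝ)
    (hC : ∀ i l, 0 ≤ C i l ∧ C i l ≤ 1)
    (hCdiag : ∀ i, C i i = 0)
    (c : Fin n → ℝ)
    (hcdef : ∀ i, c i = 1 - ∑ k ∈ Finset.univ.erase i, C k i)
    (hcpos : ∀ i, 0 < c i)
    (j : Fin n → ℝ) (hj : ∀ i, j i = -1 ∨ j i = 1)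
    (J : Matrix (Fin n) (Fin n) ℝ) (hJ : J = Matrix.diagonal j)
    (Chat : Matrix (Fin n) (Fin n) ℝ) (hChat : Chat = Matrix.diagonal c)
    (A : Matrix (Fin n) (Fin n) ℝ) (hA : A = J * Chat * C * Chat⁻¹ * J)
    (vlo : Fin n → ℝ) (β : ℝ) (hβ : 0 ≤ β)
    (Dp : Fin n → ℝ)
    (U : (Fin n → ℝ) → Fin n → ℝ)
    (hU : ∀ x i, U x i = if x i < 0 then β / 2 else -(β / 2))
    (b : (Fin n → ℝ) → Fin n → ℝ)
    (hb : ∀ X, b X =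
      J *ᵥ ((Chat * C * Chat⁻¹ - 1) *ᵥ vlo +
        Chat *ᵥ (Dp - U (J *ᵥ X) - (β / 2) • (1 : Fin n → ℝ))))
    (hzero : ∀ i l, j i = 1 → j l = -1 → C i l = 0)
    (hDpP : ∀ i, j i = 1 → ((Chat⁻¹ - C * Chat⁻¹) *ᵥ vlo) i ≤ Dp i)
    (X : ℕ → Fin n → ℝ)
    (hdyn : ∀ t, X (t + 1) = A *ᵥ X t + b (X t))
    (hX0 : ∀ i, j i = 1 → 0 ≤ X 0 i) :
    ∀ t i, j i = 1 → 0 ≤ X t i := by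
  have hcne : ∀ i, c i ≠ 0 := fun i => ne_of_gt (hcpos i)
  have hChatinv : Chat⁻¹ = Matrix.diagonal (fun l => (c l)⁻¹) := by
    apply Matrix.inv_eq_right_inv
    rw [hChat, Matrix.diagonal_mul_diagonal]
    have : (fun l => c l * (c l)⁻¹) = fun _ : Fin n => (1 : ℝ) := by
      funext l; exact mul_inv_cancel₀ (hcne l)
    rw [this, Matrix.diagonal_one]
  have hAentry : ∀ i l, A i l = j i * c i * C i l * (c l)⁻¹ * j l := by
    intro i l
    rw [hA, hChatinv, hJ, hChat]
    simp only [Matrix.diagonal_mul_diagonal, Matrix.diagonal_mul, Matrix.mul_diagonal, Pi.mul_apply]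
  intro t
  induction t with
  | zero => exact hX0
  | succ t ih =>
    intro i hi
    rw [hdyn t]
    have h1 : 0 ≤ (A *ᵥ X t) i := by
      rw [Matrix.mulVec]
      apply Finset.sum_nonneg
      intro l _
      rcases hj l with hl | hl
      · have : C i l = 0 := hzero i l hi hl
        simp [dotProduct, hAentry, this]
      · have hA' : A i l = c i * C i l * (c l)⁻¹ := by
          rw [hAentry, hi, hl]; ring
        have hnn : (0:ℝ) ≤ A i l := by
          rw [hA']
          exact mul_nonneg (mul_nonneg (le_of_lt (hcpos i)) (hC i l).1)
            (inv_nonneg.mpr (le_of_lt (hcpos l)))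
        exact mul_nonneg hnn (ih l hl)
    have h2 : 0 ≤ b (X t) i := by
      have hJv : ∀ y : Fin n → ℝ, (J *ᵥ y) i = y i := by
        intro y; rw [hJ, Matrix.mulVec_diagonal, hi, one_mul]
      have hUval : U (J *ᵥ X t) i = -(β / 2) := by
        rw [hU, hJv, if_neg (not_lt.mpr (ih i hi))]
      have h3 : ((Chat * C * Chat⁻¹ - 1) *ᵥ vlo) i
          = c i * ((C * Chat⁻¹) *ᵥ vlo) i - vlo i := by
        rw [Matrix.sub_mulVec, Matrix.one_mulVec, Matrix.mul_assoc,
          ← Matrix.mulVec_mulVec]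
        simp only [Pi.sub_apply]
        rw [hChat, Matrix.mulVec_diagonal, ← hChat]
      have h4 : (Chat *ᵥ (Dp - U (J *ᵥ X t) - (β / 2) • (1 : Fin n → ℝ))) i
          = c i * Dp i := by
        rw [hChat, Matrix.mulVec_diagonal]
        simp [hUval]
      have hbeq : b (X t) i =
          c i * ((C * Chat⁻¹) *ᵥ vlo) i - vlo i + c i * Dp i := by
        rw [hb, hJv]
        simp only [Pi.add_apply, h3, h4]
      have hDp := hDpP i hi
      rw [Matrix.sub_mulVec] at hDp
      simp only [Pi.sub_apply] at hDp
      rw [hChatinv, Matrix.mulVec_diagonal, ← hChatinv] at hDp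
      have hDp' : vlo i - c i * ((C * Chat⁻¹) *ᵥ vlo) i ≤ c i * Dp i := by
        have h5 := mul_le_mul_of_nonneg_left hDp (le_of_lt (hcpos i))
        have hci : c i * ((c i)⁻¹ * vlo i) = vlo i := by
          rw [← mul_assoc, mul_inv_cancel₀ (hcne i), one_mul]
        rw [mul_sub, hci] at h5
        linarith
      rw [hbeq]; linarith
    exact add_nonneg h1 h2
end

section
/- (Theorem 2.) Define the constant vector U* ∈ ℝ^n by U*_i = β/2 for i ∈ Nm and U*_i = −β/2 for i ∈ P (the value of U(JX) for X in the interior of the positive orthant), and set b* := J[(Ĉ C Ĉ^{−1} − I) v̲ + Ĉ (Dp − U* − (β/2)·1)]. Assume 0 ≤ ∑_{l≠i} ĉ_{ii} c_{il} ĉ_{ll}^{−1} < 1 for every i. Then the matrix I − A, with A := J Ĉ C Ĉ^{−1} J, is invertible; the affine dynamics X(t+1) = A X(t) + b* has the unique equilibrium point X* = (I − A)^{−1} b*; and for every initial condition X(0) the trajectory X(t) converges to X* as t → ∞. Moreover, if in addition A ≥ 0 and b* ≥ 0 entrywise and X(0) ≥ 0, then X* ≥ 0 and X(t) ≥ 0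 for all t. -/
open Matrix

/-- Theorem 2: under the row-sum condition, `I - A` is invertible, the affine
dynamics `X(t+1) = A X(t) + b*` has `X* = (I - A)⁻¹ b*` as its unique equilibrium, every
trajectory converges to `X*`, and under additional nonnegativity assumptions `X* ≥ 0` and
the trajectory stays nonnegative. -/
theorem stmt_8
    (n : ℕ) (hn : 1 ≤ n)
    (C : Matrix (Fin n) (Fin n) ℝ)
    (hC : ∀ i l, 0 ≤ C i l ∧ C i l ≤ 1)
    (hCdiag : ∀ i, C i i = 0)
    (c : Fin n → ℝ)
    (hcdef : ∀ i, c i = 1 - ∑ k ∈ Finset.univ.erase i, C k i)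
    (hcpos : ∀ i, 0 < c i)
    (j : Fin n → ℝ) (hj : ∀ i, j i = -1 ∨ j i = 1)
    (J : Matrix (Fin n) (Fin n) ℝ) (hJ : J = Matrix.diagonal j)
    (Chat : Matrix (Fin n) (Fin n) ℝ) (hChat : Chat = Matrix.diagonal c)
    (A : Matrix (Fin n) (Fin n) ℝ) (hA : A = J * Chat * C * Chat⁻¹ * J)
    (vlo : Fin n → ℝ) (β : ℝ) (hβ : 0 ≤ β)
    (Dp : Fin n → ℝ)
    (Ustar : Fin n → ℝ)
    (hUstar : ∀ i, Ustar i = if j i = -1 then β / 2 else -(β / 2))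
    (bstar : Fin n → ℝ)
    (hbstar : bstar =
      J *ᵥ ((Chat * C * Chat⁻¹ - 1) *ᵥ vlo +
        Chat *ᵥ (Dp - Ustar - (β / 2) • (1 : Fin n → ℝ))))
    (hsum : ∀ i, 0 ≤ ∑ l ∈ Finset.univ.erase i, c i * C i l * (c l)⁻¹ ∧
      ∑ l ∈ Finset.univ.erase i, c i * C i l * (c l)⁻¹ < 1) :
    IsUnit (1 - A) ∧
    (∀ Y : Fin n → ℝ, Y = A *ᵥ Y + bstar ↔ Y = (1 - A)⁻¹ *ᵥ bstar) ∧
    (∀ X : ℕ → Fin n → ℝ, (∀ t, X (t + 1) = A *ᵥ X t + bstar) →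
      Filter.Tendsto X Filter.atTop (nhds ((1 - A)⁻¹ *ᵥ bstar))) ∧
    ((∀ i l, 0 ≤ A i l) → (∀ i, 0 ≤ bstar i) →
      (∀ i, 0 ≤ ((1 - A)⁻¹ *ᵥ bstar) i) ∧
      (∀ X : ℕ → Fin n → ℝ, (∀ t, X (t + 1) = A *ᵥ X t + bstar) →
        (∀ i, 0 ≤ X 0 i) → ∀ t i, 0 ≤ X t i)) := by
  have hcne : ∀ i, c i ≠ 0 := fun i => (hcpos i).ne'
  -- entrywise formula for A
  have hRinv : Ring.inverse c = fun l => (c l)⁻¹ := by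
    have hu := Ring.inverse_unit
      (⟨c, fun l => (c l)⁻¹, funext fun l => mul_inv_cancel₀ (hcne l),
        funext fun l => inv_mul_cancel₀ (hcne l)⟩ : (Fin n → ℝ)ˣ)
    simpa using hu
  have hAentry : ∀ i l, A i l = j i * c i * C i l * (c l)⁻¹ * j l := by
    intro i l
    subst hA hJ hChat
    rw [Matrix.inv_diagonal, hRinv]
    simp only [Matrix.mul_diagonal, Matrix.diagonal_mul_diagonal, Matrix.diagonal_mul]
  have hjabs : ∀ i, |j i| = 1 := by
    intro i; rcases hj i with h | h <;> simp [h]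
  have habs : ∀ i l, |A i l| = c i * C i l * (c l)⁻¹ := by
    intro i l
    rw [hAentry i l, abs_mul, abs_mul, abs_mul, abs_mul, hjabs i, hjabs l,
      abs_of_nonneg (hcpos i).le, abs_of_nonneg (hC i l).1,
      abs_of_nonneg (inv_nonneg.mpr (hcpos l).le)]
    ring
  have hrowsum : ∀ i, ∑ l, |A i l| = ∑ l ∈ Finset.univ.erase i, c i * C i l * (c l)⁻¹ := by
    intro i
    have hii : |A i i| = 0 := by rw [habs, hCdiag]; ring
    rw [← Finset.add_sum_erase _ (fun l => |A i l|) (Finset.mem_univ i), hii, zero_add]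
    exact Finset.sum_congr rfl fun l _ => habs i l
  have hne : (Finset.univ : Finset (Fin n)).Nonempty := ⟨⟨0, hn⟩, Finset.mem_univ _⟩
  set r : ℝ := Finset.univ.sup' hne (fun i => ∑ l, |A i l|) with hrdef
  have hr0 : 0 ≤ r := by
    refine le_trans ?_ (Finset.le_sup' (fun i => ∑ l, |A i l|) (Finset.mem_univ ⟨0, hn⟩))
    exact Finset.sum_nonneg fun l _ => abs_nonneg _
  have hr1 : r < 1 := by
    rw [hrdef]
    refine Finset.sup'_lt_iff hne |>.mpr fun i _ => ?_
    rw [hrowsum]; exact (hsum i).2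
  have hrow_le : ∀ i, ∑ l, |A i l| ≤ r :=
    fun i => Finset.le_sup' (fun i => ∑ l, |A i l|) (Finset.mem_univ i)
  -- operator bound in sup norm
  have hbound : ∀ v : Fin n → ℝ, ‖A *ᵥ v‖ ≤ r * ‖v‖ := by
    intro v
    rw [pi_norm_le_iff_of_nonneg (mul_nonneg hr0 (norm_nonneg v))]
    intro i
    have hmv : (A *ᵥ v) i = ∑ l, A i l * v l := rfl
    rw [Real.norm_eq_abs, hmv]
    calc |∑ l, A i l * v l| ≤ ∑ l, |A i l * v l| := Finset.abs_sum_le_sum_abs _ _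
      _ = ∑ l, |A i l| * |v l| := by simp [abs_mul]
      _ ≤ ∑ l, |A i l| * ‖v‖ := by
          refine Finset.sum_le_sum fun l _ => ?_
          exact mul_le_mul_of_nonneg_left
            (by simpa [Real.norm_eq_abs] using norm_le_pi_norm v l) (abs_nonneg _)
      _ = (∑ l, |A i l|) * ‖v‖ := by rw [Finset.sum_mul]
      _ ≤ r * ‖v‖ := mul_le_mul_of_nonneg_right (hrow_le i) (norm_nonneg v)
  -- invertibility
  have hdet : (1 - A).det ≠ 0 := by
    intro h
    obtain ⟨v, hv0, hv⟩ := (Matrix.exists_mulVec_eq_zero_iff).mpr h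
    have hvA : v = A *ᵥ v := by
      rw [Matrix.sub_mulVec, Matrix.one_mulVec, sub_eq_zero] at hv
      exact hv
    have h1 : ‖v‖ ≤ r * ‖v‖ := by
      conv_lhs => rw [hvA]
      exact hbound v
    have h2 : 0 < ‖v‖ := norm_pos_iff.mpr hv0
    nlinarith
  have hU : IsUnit (1 - A) :=
    (Matrix.isUnit_iff_isUnit_det _).mpr (isUnit_iff_ne_zero.mpr hdet)
  have hinv1 : (1 - A)⁻¹ * (1 - A) = 1 :=
    Matrix.nonsing_inv_mul _ (isUnit_iff_ne_zero.mpr hdet)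
  have hinv2 : (1 - A) * (1 - A)⁻¹ = 1 :=
    Matrix.mul_nonsing_inv _ (isUnit_iff_ne_zero.mpr hdet)
  -- fixed point characterization
  have hiff : ∀ Y : Fin n → ℝ, Y = A *ᵥ Y + bstar ↔ Y = (1 - A)⁻¹ *ᵥ bstar := by
    intro Y
    constructor
    · intro h
      have h' : (1 - A) *ᵥ Y = bstar := by
        rw [Matrix.sub_mulVec, Matrix.one_mulVec]
        exact sub_eq_of_eq_add' h
      calc Y = ((1 - A)⁻¹ * (1 - A)) *ᵥ Y := by rw [hinv1, Matrix.one_mulVec]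
        _ = (1 - A)⁻¹ *ᵥ ((1 - A) *ᵥ Y) := (Matrix.mulVec_mulVec _ _ _).symm
        _ = (1 - A)⁻¹ *ᵥ bstar := by rw [h']
    · intro h
      have h' : (1 - A) *ᵥ Y = bstar := by
        rw [h, Matrix.mulVec_mulVec, hinv2, Matrix.one_mulVec]
      rw [Matrix.sub_mulVec, Matrix.one_mulVec] at h'
      exact eq_add_of_sub_eq' h'
  set Xs : Fin n → ℝ := (1 - A)⁻¹ *ᵥ bstar with hXs
  have hfix : Xs = A *ᵥ Xs + bstar := (hiff Xs).mpr rfl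
  have h2 : A *ᵥ Xs = Xs - bstar := eq_sub_of_add_eq hfix.symm
  -- convergence
  have hconv : ∀ X : ℕ → Fin n → ℝ, (∀ t, X (t + 1) = A *ᵥ X t + bstar) →
      Filter.Tendsto X Filter.atTop (nhds Xs) := by
    intro X hX
    have key : ∀ t, ‖X t - Xs‖ ≤ r ^ t * ‖X 0 - Xs‖ := by
      intro t
      induction t with
      | zero => simp
      | succ t ih =>
        have hstep : X (t + 1) - Xs = A *ᵥ (X t - Xs) := by
          rw [hX t, Matrix.mulVec_sub, h2]; abel
        calc ‖X (t + 1) - Xs‖ = ‖A *ᵥ (X t - Xs)‖ := by rw [hstep]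
          _ ≤ r * ‖X t - Xs‖ := hbound _
          _ ≤ r * (r ^ t * ‖X 0 - Xs‖) := mul_le_mul_of_nonneg_left ih hr0
          _ = r ^ (t + 1) * ‖X 0 - Xs‖ := by ring
    have h0 : Filter.Tendsto (fun t : ℕ => r ^ t * ‖X 0 - Xs‖) Filter.atTop (nhds 0) := by
      simpa using (tendsto_pow_atTop_nhds_zero_of_lt_one hr0 hr1).mul_const ‖X 0 - Xs‖
    have hnorm : Filter.Tendsto (fun t => ‖X t - Xs‖) Filter.atTop (nhds 0) :=
      squeeze_zero (fun t => norm_nonneg _) key h0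
    exact tendsto_iff_norm_sub_tendsto_zero.mpr hnorm
  refine ⟨hU, hiff, hconv, ?_⟩
  intro hA0 hb0
  have hmv : ∀ v : Fin n → ℝ, (∀ i, 0 ≤ v i) → ∀ i, 0 ≤ (A *ᵥ v) i := by
    intro v hv i
    have : (A *ᵥ v) i = ∑ l, A i l * v l := rfl
    rw [this]
    exact Finset.sum_nonneg fun l _ => mul_nonneg (hA0 i l) (hv l)
  have htraj : ∀ X : ℕ → Fin n → ℝ, (∀ t, X (t + 1) = A *ᵥ X t + bstar) →
      (∀ i, 0 ≤ X 0 i) → ∀ t i, 0 ≤ X t i := by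
    intro X hX hX0 t
    induction t with
    | zero => exact hX0
    | succ t ih =>
      intro i
      rw [hX t]
      exact add_nonneg (hmv _ ih i) (hb0 i)
  refine ⟨?_, htraj⟩
  -- nonnegativity of the equilibrium via the trajectory starting at 0
  set Z : ℕ → Fin n → ℝ := fun t => Nat.rec (0 : Fin n → ℝ) (fun _ Y => A *ᵥ Y + bstar) t
    with hZdef
  have hZrec : ∀ t, Z (t + 1) = A *ᵥ Z t + bstar := fun t => rfl
  have hZ0 : ∀ i, 0 ≤ Z 0 i := fun i => le_refl 0
  have hZnn : ∀ t i, 0 ≤ Z t i := htraj Z hZrec hZ0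
  have hZconv := hconv Z hZrec
  intro i
  have hci : Filter.Tendsto (fun t => Z t i) Filter.atTop (nhds (Xs i)) :=
    tendsto_pi_nhds.mp hZconv i
  exact ge_of_tendsto' hci fun t => hZnn t i
end

section
/- (Theorem 3.) Consider the dynamics X(t+1) = A X(t) + b(X(t)) and fix upper bounds X̄_l for l ∈ Nm. Assume: (i) X_l(t) ≤ X̄_l for every l ∈ Nm and every t ≥ 0; and (ii) for every i ∈ P, (Dp)_i ≥ ((Ĉ^{−1} − C Ĉ^{−1}) v̲)_i − ĉ_{ii}^{−1} ∑_{l ∈ Nm} a_{il} X̄_l (note that a_{il} = −ĉ_{ii} c_{il} ĉ_{ll}^{−1} ≤ 0 for i ∈ P, l ∈ Nm, so the subtracted term is nonpositive). Then X_i(0) ≥ 0 for every i ∈ P implies X_i(t) ≥ 0 for every i ∈ P and every t = 0, 1, 2, …. -/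
open Matrix

/-- Theorem 3: with the failed components bounded by `X̄` and the relaxed
investment condition on `P`, the `P`-components remain nonnegative along the dynamics. -/
theorem stmt_9
    (n : ℕ) (hn : 1 ≤ n)
    (C : Matrix (Fin n) (Fin n) ℝ)
    (hC : ∀ i l, 0 ≤ C i l ∧ C i l ≤ 1)
    (hCdiag : ∀ i, C i i = 0)
    (c : Fin n → ℝ)
    (hcdef : ∀ i, c i = 1 - ∑ k ∈ Finset.univ.erase i, C k i)
    (hcpos : ∀ i, 0 < c i)
    (j : Fin n → ℝ) (hj : ∀ i, j i = -1 ∨ j i = 1)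
    (J : Matrix (Fin n) (Fin n) ℝ) (hJ : J = Matrix.diagonal j)
    (Chat : Matrix (Fin n) (Fin n) ℝ) (hChat : Chat = Matrix.diagonal c)
    (A : Matrix (Fin n) (Fin n) ℝ) (hA : A = J * Chat * C * Chat⁻¹ * J)
    (vlo : Fin n → ℝ) (β : ℝ) (hβ : 0 ≤ β)
    (Dp : Fin n → ℝ)
    (U : (Fin n → ℝ) → Fin n → ℝ)
    (hU : ∀ x i, U x i = if x i < 0 then β / 2 else -(β / 2))
    (b : (Fin n → ℝ) → Fin n → ℝ)
    (hb : ∀ X, b X =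
      J *ᵥ ((Chat * C * Chat⁻¹ - 1) *ᵥ vlo +
        Chat *ᵥ (Dp - U (J *ᵥ X) - (β / 2) • (1 : Fin n → ℝ))))
    (Xbar : Fin n → ℝ)
    (X : ℕ → Fin n → ℝ)
    (hdyn : ∀ t, X (t + 1) = A *ᵥ X t + b (X t))
    (hbound : ∀ t, ∀ l, j l = -1 → X t l ≤ Xbar l)
    (hDpP : ∀ i, j i = 1 →
      ((Chat⁻¹ - C * Chat⁻¹) *ᵥ vlo) i -
        (c i)⁻¹ * ∑ l ∈ Finset.univ.filter (fun l => j l = -1), A i l * Xbar l ≤ Dp i)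
    (hX0 : ∀ i, j i = 1 → 0 ≤ X 0 i) :
    ∀ t i, j i = 1 → 0 ≤ X t i := by
  have hcne : ∀ i, c i ≠ 0 := fun i => ne_of_gt (hcpos i)
  have hCinv : Chat⁻¹ = Matrix.diagonal (fun i => (c i)⁻¹) := by
    rw [hChat]
    apply Matrix.inv_eq_right_inv
    rw [Matrix.diagonal_mul_diagonal]
    have h : (fun i => c i * (c i)⁻¹) = fun _ => (1 : ℝ) :=
      funext fun i => mul_inv_cancel₀ (hcne i)
    rw [h, Matrix.diagonal_one]
  have hAe : ∀ i l, A i l = j i * c i * C i l * (c l)⁻¹ * j l := by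
    intro i l
    rw [hA, hCinv, hJ, hChat]
    simp [Matrix.diagonal_mul_diagonal, Matrix.diagonal_mul, Matrix.mul_diagonal,
      Matrix.mul_apply, Matrix.diagonal_apply, ite_mul, zero_mul, mul_ite, mul_zero,
      Finset.sum_ite_eq, Finset.sum_ite_eq']
  have hDPe : ∀ i, ((Chat⁻¹ - C * Chat⁻¹) *ᵥ vlo) i
      = (c i)⁻¹ * vlo i - ∑ l, C i l * ((c l)⁻¹ * vlo l) := by
    intro i
    rw [Matrix.sub_mulVec, hCinv, ← Matrix.mulVec_mulVec]
    simp [Matrix.mulVec_diagonal, Matrix.mulVec, dotProduct,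
      Matrix.diagonal_apply, ite_mul, zero_mul, Finset.sum_ite_eq, mul_assoc]
  have key : ∀ t, (∀ i, j i = 1 → 0 ≤ X t i) → ∀ i, j i = 1 → 0 ≤ X (t + 1) i := by
    intro t ih i hji
    have hU0 : U (J *ᵥ X t) i = -(β / 2) := by
      rw [hU]
      have hxi : (J *ᵥ X t) i = X t i := by
        rw [hJ, Matrix.mulVec_diagonal, hji, one_mul]
      rw [hxi, if_neg (not_lt.mpr (ih i hji))]
    rw [hJ] at hU0
    have hbXe : b (X t) i = (∑ l, c i * (C i l * ((c l)⁻¹ * vlo l))) - vlo i + c i * Dp i := by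
      rw [hb]
      conv_lhs => rw [hJ]
      rw [Matrix.mulVec_diagonal, hji, one_mul]
      rw [Pi.add_apply, Matrix.sub_mulVec, Pi.sub_apply, Matrix.one_mulVec]
      rw [hCinv, hChat, ← Matrix.mulVec_mulVec, ← Matrix.mulVec_mulVec]
      rw [Matrix.mulVec_diagonal, Matrix.mulVec_diagonal]
      have h2 : (Dp - U (Matrix.diagonal j *ᵥ X t) - (β / 2) • (1 : Fin n → ℝ)) i = Dp i := by
        simp [hU0]
      rw [h2]
      have h1 : (C *ᵥ ((Matrix.diagonal fun i => (c i)⁻¹) *ᵥ vlo)) i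
          = ∑ l, C i l * ((c l)⁻¹ * vlo l) := by
        simp [Matrix.mulVec, dotProduct, Matrix.diagonal_apply,
          ite_mul, zero_mul, Finset.sum_ite_eq, mul_assoc]
      rw [h1, Finset.mul_sum]
    have hAX : (A *ᵥ X t) i = ∑ l, A i l * X t l := by
      simp [Matrix.mulVec, dotProduct]
    set S := ∑ l ∈ Finset.univ.filter (fun l => j l = -1), A i l * Xbar l with hS
    have hsum : S ≤ ∑ l, A i l * X t l := by
      rw [← Finset.sum_filter_add_sum_filter_not Finset.univ (fun l => j l = -1)
        (fun l => A i l * X t l)]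
      have h1 : S ≤ ∑ l ∈ Finset.univ.filter (fun l => j l = -1), A i l * X t l := by
        apply Finset.sum_le_sum
        intro l hl
        have hjl : j l = -1 := (Finset.mem_filter.mp hl).2
        have hp : 0 ≤ c i * C i l * (c l)⁻¹ :=
          mul_nonneg (mul_nonneg (hcpos i).le (hC i l).1) (inv_nonneg.mpr (hcpos l).le)
        have hAneg : A i l ≤ 0 := by
          rw [hAe, hji, hjl]; nlinarith
        have hxb := hbound t l hjl
        nlinarith
      have h2 : 0 ≤ ∑ l ∈ Finset.univ.filter (fun l => ¬ j l = -1), A i l * X t l := by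
        apply Finset.sum_nonneg
        intro l hl
        have hjl : j l = 1 := by
          rcases hj l with h | h
          · exact absurd h (Finset.mem_filter.mp hl).2
          · exact h
        have hp : 0 ≤ c i * C i l * (c l)⁻¹ :=
          mul_nonneg (mul_nonneg (hcpos i).le (hC i l).1) (inv_nonneg.mpr (hcpos l).le)
        have hApos : 0 ≤ A i l := by
          rw [hAe, hji, hjl]; nlinarith
        exact mul_nonneg hApos (ih l hjl)
      linarith
    have hDp := hDpP i hji
    rw [hDPe] at hDp
    set T := ∑ l, C i l * ((c l)⁻¹ * vlo l) with hT
    have hmul := mul_le_mul_of_nonneg_left hDp (hcpos i).le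
    have e1 : c i * (c i)⁻¹ = 1 := mul_inv_cancel₀ (hcne i)
    have hexp : c i * ((c i)⁻¹ * vlo i - T - (c i)⁻¹ * S) = vlo i - c i * T - S := by
      linear_combination (vlo i - S) * e1
    rw [hexp] at hmul
    have hsum2 : c i * T = ∑ l, c i * (C i l * ((c l)⁻¹ * vlo l)) := by
      rw [hT, Finset.mul_sum]
    rw [hdyn t, Pi.add_apply, hAX, hbXe, ← hsum2]
    linarith
  intro t
  induction t with
  | zero => exact hX0
  | succ t ih => exact key t ih
end

section
/- (Theorem 5, feedforward design with bounded failed components.) Consider the dynamics X(t+1) = A X(t) + b(X(t)) in which the external-investment vector Dp is replaced by the designed input u̲ with components u̲_i := ((Ĉ^{−1} − C Ĉ^{−1}) v̲)_i − ĉ_{ii}^{−1} ∑_{l ∈ Nm} a_{il} X̄_l + ξ_i for i ∈ P, where ξ_i > 0 and X̄_l for l ∈ Nm are fixed upper bounds. Assume X_l(t) ≤ X̄_l for every l ∈ Nm and every t ≥ 0. Then X_i(0) ≥ 0 for every i ∈ P implies X_i(t) ≥ 0 for every i ∈ P and every t = 0, 1, 2, …. -/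
open Matrix

/-- Theorem 5: with the designed feedforward input `u̲` on the components in
`P` and the failed components bounded by `X̄`, the `P`-components remain nonnegative. -/
theorem stmt_11
    (n : ℕ) (hn : 1 ≤ n)
    (C : Matrix (Fin n) (Fin n) ℝ)
    (hC : ∀ i l, 0 ≤ C i l ∧ C i l ≤ 1)
    (hCdiag : ∀ i, C i i = 0)
    (c : Fin n → ℝ)
    (hcdef : ∀ i, c i = 1 - ∑ k ∈ Finset.univ.erase i, C k i)
    (hcpos : ∀ i, 0 < c i)
    (j : Fin n → ℝ) (hj : ∀ i, j i = -1 ∨ j i = 1)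
    (J : Matrix (Fin n) (Fin n) ℝ) (hJ : J = Matrix.diagonal j)
    (Chat : Matrix (Fin n) (Fin n) ℝ) (hChat : Chat = Matrix.diagonal c)
    (A : Matrix (Fin n) (Fin n) ℝ) (hA : A = J * Chat * C * Chat⁻¹ * J)
    (vlo : Fin n → ℝ) (β : ℝ) (hβ : 0 ≤ β)
    (U : (Fin n → ℝ) → Fin n → ℝ)
    (hU : ∀ x i, U x i = if x i < 0 then β / 2 else -(β / 2))
    (Xbar : Fin n → ℝ)
    (ξ : Fin n → ℝ) (hξ : ∀ i, j i = 1 → 0 < ξ i)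
    (u : Fin n → ℝ)
    (hu : ∀ i, j i = 1 → u i =
      ((Chat⁻¹ - C * Chat⁻¹) *ᵥ vlo) i -
        (c i)⁻¹ * (∑ l ∈ Finset.univ.filter (fun l => j l = -1), A i l * Xbar l) + ξ i)
    (b : (Fin n → ℝ) → Fin n → ℝ)
    (hb : ∀ X, b X =
      J *ᵥ ((Chat * C * Chat⁻¹ - 1) *ᵥ vlo +
        Chat *ᵥ (u - U (J *ᵥ X) - (β / 2) • (1 : Fin n → ℝ))))
    (X : ℕ → Fin n → ℝ)
    (hdyn : ∀ t, X (t + 1) = A *ᵥ X t + b (X t))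
    (hbound : ∀ t, ∀ l, j l = -1 → X t l ≤ Xbar l)
    (hX0 : ∀ i, j i = 1 → 0 ≤ X 0 i) :
    ∀ t i, j i = 1 → 0 ≤ X t i := by
  have hc0 : ∀ i, c i ≠ 0 := fun i => (hcpos i).ne'
  have hChatInv : Chat⁻¹ = Matrix.diagonal (fun i => (c i)⁻¹) := by
    apply Matrix.inv_eq_right_inv
    rw [hChat, Matrix.diagonal_mul_diagonal]
    rw [show (fun i => c i * (c i)⁻¹) = fun _ => (1:ℝ) from funext fun i => mul_inv_cancel₀ (hc0 i),
      Matrix.diagonal_one]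
  have hAe : ∀ i l, A i l = j i * c i * C i l * (c l)⁻¹ * j l := by
    intro i l
    rw [hA, hChatInv, hJ, hChat, Matrix.diagonal_mul_diagonal,
      Matrix.mul_diagonal, Matrix.mul_diagonal, Matrix.diagonal_mul]
  intro t
  induction t with
  | zero => exact hX0
  | succ t ih =>
    intro i hi
    have hXi := ih i hi
    have hJX : (J *ᵥ X t) i = X t i := by
      rw [hJ, Matrix.mulVec_diagonal, hi, one_mul]
    have hUi : U (J *ᵥ X t) i = -(β / 2) := by
      rw [hU, hJX, if_neg (not_lt.mpr hXi)]
    -- compute b (X t) i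
    have hbi : b (X t) i =
        -(∑ l ∈ Finset.univ.filter (fun l => j l = -1), A i l * Xbar l) + c i * ξ i := by
      have hJw : ∀ w : Fin n → ℝ, (J *ᵥ w) i = w i := fun w => by
        rw [hJ, Matrix.mulVec_diagonal, hi, one_mul]
      rw [hb, hJw]
      simp only [Pi.add_apply]
      rw [Matrix.sub_mulVec, Matrix.one_mulVec, Pi.sub_apply]
      have h1 : ((Chat * C * Chat⁻¹) *ᵥ vlo) i = c i * ((C * Chat⁻¹) *ᵥ vlo) i := by
        rw [mul_assoc, ← Matrix.mulVec_mulVec, hChat, Matrix.mulVec_diagonal]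
      have h2 : (Chat *ᵥ (u - U (J *ᵥ X t) - (β / 2) • (1 : Fin n → ℝ))) i = c i * u i := by
        rw [hChat, Matrix.mulVec_diagonal]
        simp only [Pi.sub_apply, Pi.smul_apply, Pi.one_apply, smul_eq_mul, mul_one, hUi]
        ring
      rw [h1, h2, hu i hi, Matrix.sub_mulVec, Pi.sub_apply]
      have h3 : (Chat⁻¹ *ᵥ vlo) i = (c i)⁻¹ * vlo i := by
        rw [hChatInv, Matrix.mulVec_diagonal]
      rw [h3]
      have hci : c i * (c i)⁻¹ = 1 := mul_inv_cancel₀ (hc0 i)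
      field_simp
      linear_combination (vlo i - ∑ x ∈ Finset.filter (fun l => j l = -1) Finset.univ,
        A i x * Xbar x) * hci
    -- main step
    have hAv : (A *ᵥ X t) i = ∑ l, A i l * X t l := rfl
    have hsplit :
        (∑ l, A i l * X t l) =
          (∑ l ∈ Finset.univ.filter (fun l => j l = -1), A i l * X t l) +
          (∑ l ∈ Finset.univ.filter (fun l => ¬ j l = -1), A i l * X t l) :=
      (Finset.sum_filter_add_sum_filter_not _ _ _).symm
    have hdiff :
        (∑ l ∈ Finset.univ.filter (fun l => j l = -1), A i l * X t l) -
          (∑ l ∈ Finset.univ.filter (fun l => j l = -1), A i l * Xbar l) =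
          ∑ l ∈ Finset.univ.filter (fun l => j l = -1), A i l * (X t l - Xbar l) := by
      rw [← Finset.sum_sub_distrib]
      exact Finset.sum_congr rfl (fun l _ => by ring)
    have hXt1 : X (t + 1) i =
        (∑ l ∈ Finset.univ.filter (fun l => j l = -1), A i l * (X t l - Xbar l)) +
        (∑ l ∈ Finset.univ.filter (fun l => ¬ j l = -1), A i l * X t l) + c i * ξ i := by
      rw [hdyn t, Pi.add_apply, hAv, hbi, hsplit, ← hdiff]
      ring
    rw [hXt1]
    have hs1 : 0 ≤ ∑ l ∈ Finset.univ.filter (fun l => j l = -1), A i l * (X t l - Xbar l) := by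
      apply Finset.sum_nonneg
      intro l hl
      rw [Finset.mem_filter] at hl
      have hjl : j l = -1 := hl.2
      have hAle : A i l ≤ 0 := by
        rw [hAe, hi, hjl]
        have : (0:ℝ) ≤ c i * C i l * (c l)⁻¹ :=
          mul_nonneg (mul_nonneg (hcpos i).le (hC i l).1) (inv_nonneg.mpr (hcpos l).le)
        nlinarith
      have hXle : X t l - Xbar l ≤ 0 := sub_nonpos.mpr (hbound t l hjl)
      nlinarith
    have hs2 : 0 ≤ ∑ l ∈ Finset.univ.filter (fun l => ¬ j l = -1), A i l * X t l := by
      apply Finset.sum_nonneg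
      intro l hl
      rw [Finset.mem_filter] at hl
      have hjl : j l = 1 := (hj l).resolve_left hl.2
      apply mul_nonneg
      · rw [hAe, hi, hjl]
        have : (0:ℝ) ≤ c i * C i l * (c l)⁻¹ :=
          mul_nonneg (mul_nonneg (hcpos i).le (hC i l).1) (inv_nonneg.mpr (hcpos l).le)
        nlinarith
      · exact ih l hjl
    have hs3 : 0 ≤ c i * ξ i := mul_nonneg (hcpos i).le (hξ i hi).le
    linarith
end
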